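/- arXiv:2110.00932 — 2 statements merged into one kernel-verified Lean document; each statement's English description precedes it below -/
import Mathlib

section
/- The identity channel id : L(H) → L(H) (dim H ≥ 2) is not compatible with itself: there is no channel Λ : L(H) → L(H ⊗ H) such that Tr₂[Λ(ρ)] = ρ and Tr₁[Λ(ρ)] = ρ for all density matrices ρ (no-cloning/no-broadcasting for the identity channel). -/
open Matrix BigOperators ComplexOrder

noncomputable section

/-- Partial trace over the second tensor factor. -/
def ptraceRight {A B : Type*} [Fintype B] (M : Matrix (A × B) (A × B) ℂ) :
    Matrix A A ℂ := fun i j => ∑ k, M (i, k) (j, k)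

/-- Partial trace over the first tensor factor. -/
def ptraceLeft {A B : Type*} [Fintype A] (M : Matrix (A × B) (A × B) ℂ) :
    Matrix B B ℂ := fun i j => ∑ k, M (k, i) (k, j)

/-- Complete positivity, via existence of a Kraus decomposition (Choi's theorem). -/
def IsCP {H K : Type*} [Fintype H] [Fintype K]
    (Φ : Matrix H H ℂ →ₗ[ℂ] Matrix K K ℂ) : Prop :=
  ∃ (m : ℕ) (Ks : Fin m → Matrix K H ℂ), ∀ ρ, Φ ρ = ∑ i, Ks i * ρ * (Ks i)ᴴ

def IsTP {H K : Type*} [Fintype H] [Fintype K]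
    (Φ : Matrix H H ℂ →ₗ[ℂ] Matrix K K ℂ) : Prop :=
  ∀ ρ, (Φ ρ).trace = ρ.trace

/-- A quantum channel is a CPTP map. -/
def IsChannel {H K : Type*} [Fintype H] [Fintype K]
    (Φ : Matrix H H ℂ →ₗ[ℂ] Matrix K K ℂ) : Prop := IsCP Φ ∧ IsTP Φ

/-- A quantum instrument: a finite family of CP maps summing to a CPTP map. -/
def IsInstrument {ι H K : Type*} [Fintype ι] [Fintype H] [Fintype K]
    (Φ : ι → (Matrix H H ℂ →ₗ[ℂ] Matrix K K ℂ)) : Prop :=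
  (∀ x, IsCP (Φ x)) ∧ IsTP (∑ x, Φ x)

def IsDensity {H : Type*} [Fintype H] (ρ : Matrix H H ℂ) : Prop :=
  ρ.PosSemidef ∧ ρ.trace = 1

def IsPOVM {ι H : Type*} [Fintype ι] [Fintype H] [DecidableEq H]
    (A : ι → Matrix H H ℂ) : Prop :=
  (∀ x, (A x).PosSemidef) ∧ (∑ x, A x) = 1

/-- `Φd` is the Heisenberg dual of `Φ`. -/
def IsDual {H K : Type*} [Fintype H] [Fintype K]
    (Φ : Matrix H H ℂ →ₗ[ℂ] Matrix K K ℂ)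
    (Φd : Matrix K K ℂ →ₗ[ℂ] Matrix H H ℂ) : Prop :=
  ∀ ρ X, ((Φ ρ) * X).trace = (ρ * Φd X).trace

/-- The instrument `I` measures the observable `A`. -/
def ACompatible {ι H K : Type*} [Fintype ι] [Fintype H] [Fintype K]
    (A : ι → Matrix H H ℂ) (I : ι → (Matrix H H ℂ →ₗ[ℂ] Matrix K K ℂ)) : Prop :=
  ∀ ρ, IsDensity ρ → ∀ x, (I x ρ).trace = (ρ * A x).trace

/-- Observable-observable compatibility: existence of a joint POVM. -/
def ObsCompatible {ιx ιy H : Type*} [Fintype ιx] [Fintype ιy] [Fintype H] [DecidableEq H]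
    (A : ιx → Matrix H H ℂ) (B : ιy → Matrix H H ℂ) : Prop :=
  ∃ G : ιx × ιy → Matrix H H ℂ, IsPOVM G ∧
    (∀ x, ∑ y, G (x, y) = A x) ∧ (∀ y, ∑ x, G (x, y) = B y)

/-- Channel-channel compatibility: existence of a joint channel. -/
def ChannelsCompatible {H K₁ K₂ : Type*} [Fintype H] [Fintype K₁] [Fintype K₂]
    (Λ₁ : Matrix H H ℂ →ₗ[ℂ] Matrix K₁ K₁ ℂ)
    (Λ₂ : Matrix H H ℂ →ₗ[ℂ] Matrix K₂ K₂ ℂ) : Prop :=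
  ∃ Λ : Matrix H H ℂ →ₗ[ℂ] Matrix (K₁ × K₂) (K₁ × K₂) ℂ, IsChannel Λ ∧
    (∀ ρ, ptraceRight (Λ ρ) = Λ₁ ρ) ∧ (∀ ρ, ptraceLeft (Λ ρ) = Λ₂ ρ)

/-- Observable-channel compatibility. -/
def ObsChannelCompatible {ι H K : Type*} [Fintype ι] [Fintype H] [Fintype K]
    (A : ι → Matrix H H ℂ) (Λ : Matrix H H ℂ →ₗ[ℂ] Matrix K K ℂ) : Prop :=
  ∃ I : ι → (Matrix H H ℂ →ₗ[ℂ] Matrix K K ℂ),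
    IsInstrument I ∧ ACompatible A I ∧ (∑ x, I x) = Λ

/-- Traditional compatibility of two instruments with the same output space. -/
def TraditionallyCompatible {ιx ιy H K : Type*} [Fintype ιx] [Fintype ιy] [Fintype H] [Fintype K]
    (I₁ : ιx → (Matrix H H ℂ →ₗ[ℂ] Matrix K K ℂ))
    (I₂ : ιy → (Matrix H H ℂ →ₗ[ℂ] Matrix K K ℂ)) : Prop :=
  ∃ Φ : ιx × ιy → (Matrix H H ℂ →ₗ[ℂ] Matrix K K ℂ), IsInstrument Φ ∧
    (∀ x, ∑ y, Φ (x, y) = I₁ x) ∧ (∀ y, ∑ x, Φ (x, y) = I₂ y)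

/-- Parallel compatibility of two instruments. -/
def ParallelCompatible {ιx ιy H K₁ K₂ : Type*} [Fintype ιx] [Fintype ιy]
    [Fintype H] [Fintype K₁] [Fintype K₂]
    (I₁ : ιx → (Matrix H H ℂ →ₗ[ℂ] Matrix K₁ K₁ ℂ))
    (I₂ : ιy → (Matrix H H ℂ →ₗ[ℂ] Matrix K₂ K₂ ℂ)) : Prop :=
  ∃ Φ : ιx × ιy → (Matrix H H ℂ →ₗ[ℂ] Matrix (K₁ × K₂) (K₁ × K₂) ℂ), IsInstrument Φ ∧
    (∀ x ρ, ∑ y, ptraceRight (Φ (x, y) ρ) = I₁ x ρ) ∧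
    (∀ y ρ, ∑ x, ptraceLeft (Φ (x, y) ρ) = I₂ y ρ)

/-- Tensor product of two maps on matrix algebras. -/
def tensorMap {A B C D : Type*} [Fintype A] [Fintype B] [Fintype C] [Fintype D]
    [DecidableEq A] [DecidableEq B]
    (Φ : Matrix A A ℂ →ₗ[ℂ] Matrix C C ℂ) (Ψ : Matrix B B ℂ →ₗ[ℂ] Matrix D D ℂ) :
    Matrix (A × B) (A × B) ℂ →ₗ[ℂ] Matrix (C × D) (C × D) ℂ where
  toFun M := fun p q => ∑ a, ∑ a', ∑ b, ∑ b',
    M (a, b) (a', b') * (Φ (Matrix.single a a' 1)) p.1 q.1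
      * (Ψ (Matrix.single b b' 1)) p.2 q.2
  map_add' M N := by
    funext p q
    show _ = (_ : ℂ) + _
    simp [Matrix.add_apply, add_mul, Finset.sum_add_distrib]
  map_smul' c M := by
    funext p q
    show _ = c * (_ : ℂ)
    simp [Matrix.smul_apply, Finset.mul_sum, mul_assoc]

/-!
A broadcasting channel `Λ` sends a basis state `|k⟩⟨k|` to a positive matrix whose two
marginals are `|k⟩⟨k|`, so its diagonal is concentrated at `(k, k)`. Since
`|+⟩⟨+| + |-⟩⟨-| = |i⟩⟨i| + |j⟩⟨j|`, positivity confines the diagonal of `Λ |+⟩⟨+|` to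
`{(i, i), (j, j)}`, and then kills every entry outside that block. Hence the `(i, j)` entry of
its first marginal vanishes, although it should be the coherence `1/2` of `|+⟩⟨+|`.
-/

namespace Matrix.PosSemidef

section

variable {n : Type*} {M : Matrix n n ℂ}

theorem apply_eq_zero_of_apply_self_eq_zero (hM : M.PosSemidef) {p : n} (hp : M p p = 0)
    (q : n) : M p q = 0 := by
  classical
  have hdet : 0 ≤ -(M p q * star (M p q)) := by
    have h := (hM.submatrix ![p, q]).det_nonneg
    rw [det_fin_two] at h
    simpa [hp, ← hM.isHermitian.apply p q] using h
  rw [Complex.star_def, Complex.mul_conj, ← Complex.ofReal_neg, Complex.zero_le_real,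
    neg_nonneg] at hdet
  exact Complex.normSq_eq_zero.mp (le_antisymm hdet (Complex.normSq_nonneg _))

theorem apply_eq_zero_of_apply_self_eq_zero' (hM : M.PosSemidef) {p : n} (hp : M p p = 0)
    (q : n) : M q p = 0 := by
  rw [← hM.isHermitian.apply, hM.apply_eq_zero_of_apply_self_eq_zero hp, star_zero]

theorem apply_self_eq_zero_of_add {N : Matrix n n ℂ} (hM : M.PosSemidef) (hN : N.PosSemidef)
    {p : n} (h : (M + N) p p = 0) : M p p = 0 :=
  le_antisymm (le_add_of_nonneg_right hN.diag_nonneg |>.trans_eq h) hM.diag_nonneg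

end

section

variable {A B : Type*} {M : Matrix (A × B) (A × B) ℂ}

theorem apply_self_eq_zero_of_ptraceRight [Fintype B] (hM : M.PosSemidef) {a : A}
    (ha : ptraceRight M a a = 0) (b : B) : M (a, b) (a, b) = 0 :=
  (Finset.sum_eq_zero_iff_of_nonneg fun _ _ => hM.diag_nonneg).mp ha b (Finset.mem_univ b)

theorem apply_self_eq_zero_of_ptraceLeft [Fintype A] (hM : M.PosSemidef) {b : B}
    (hb : ptraceLeft M b b = 0) (a : A) : M (a, b) (a, b) = 0 :=
  (Finset.sum_eq_zero_iff_of_nonneg fun _ _ => hM.diag_nonneg).mp hb a (Finset.mem_univ a)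

theorem ptraceRight_apply_eq_zero [Fintype B] (hM : M.PosSemidef) {a a' : A}
    (h : ∀ b, M (a, b) (a, b) = 0 ∨ M (a', b) (a', b) = 0) : ptraceRight M a a' = 0 :=
  Finset.sum_eq_zero fun b _ => (h b).elim
    (fun hb => hM.apply_eq_zero_of_apply_self_eq_zero hb _)
    (fun hb => hM.apply_eq_zero_of_apply_self_eq_zero' hb _)

end

theorem apply_self_eq_zero_of_ptrace_eq_single {A : Type*} [Fintype A] [DecidableEq A]
    {M : Matrix (A × A) (A × A) ℂ} (hM : M.PosSemidef) {k : A}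
    (hR : ptraceRight M = single k k 1) (hL : ptraceLeft M = single k k 1) {p : A × A}
    (hp : p ≠ (k, k)) : M p p = 0 := by
  obtain ⟨a, b⟩ := p
  by_cases ha : k = a
  · subst ha
    have hb : k ≠ b := fun hb => hp (by rw [hb])
    exact hM.apply_self_eq_zero_of_ptraceLeft (by simp [hL, hb]) k
  · exact hM.apply_self_eq_zero_of_ptraceRight (by simp [hR, ha]) b

end Matrix.PosSemidef

theorem IsCP.posSemidef_apply {H K : Type*} [Fintype H] [Fintype K]
    {Φ : Matrix H H ℂ →ₗ[ℂ] Matrix K K ℂ} (hΦ : IsCP Φ) {ρ : Matrix H H ℂ}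
    (hρ : ρ.PosSemidef) : (Φ ρ).PosSemidef := by
  obtain ⟨m, Ks, hKs⟩ := hΦ
  rw [hKs]
  exact posSemidef_sum _ fun i _ => hρ.mul_mul_conjTranspose_same (Ks i)

theorem isDensity_single {n : Type*} [Fintype n] [DecidableEq n] (i : n) :
    IsDensity (single i i (1 : ℂ)) := by
  refine ⟨?_, by simp⟩
  rw [single_eq_single_vecMulVec_single]
  simpa using posSemidef_vecMulVec_self_star (Pi.single i (1 : ℂ))

theorem vecMulVec_add_add_vecMulVec_sub {n : Type*} (x y : n → ℂ) :
    vecMulVec (x + y) (star (x + y)) + vecMulVec (x - y) (star (x - y)) =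
      (2 : ℂ) • (vecMulVec x (star x) + vecMulVec y (star y)) := by
  ext a b
  simp only [Matrix.add_apply, Matrix.smul_apply, vecMulVec_apply, Pi.add_apply, Pi.sub_apply,
    Pi.star_apply, star_add, star_sub, smul_eq_mul]
  ring

theorem stmt_10_general {H : Type*} [Fintype H] (hdim : 2 ≤ Fintype.card H) :
    ¬ ∃ Λ : Matrix H H ℂ →ₗ[ℂ] Matrix (H × H) (H × H) ℂ, IsChannel Λ ∧
        ∀ ρ, IsDensity ρ → ptraceRight (Λ ρ) = ρ ∧ ptraceLeft (Λ ρ) = ρ := by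
  classical
  rintro ⟨Λ, ⟨hCP, -⟩, hΛ⟩
  obtain ⟨i, j, hij⟩ := Fintype.exists_pair_of_one_lt_card hdim
  set x : H → ℂ := Pi.single i 1
  set y : H → ℂ := Pi.single j 1
  set ρ : Matrix H H ℂ := (2⁻¹ : ℂ) • vecMulVec (x + y) (star (x + y))
  set σ : Matrix H H ℂ := (2⁻¹ : ℂ) • vecMulVec (x - y) (star (x - y))
  have hρ : IsDensity ρ := by
    refine ⟨(posSemidef_vecMulVec_self_star _).smul (by positivity), ?_⟩
    norm_num [ρ, x, y, trace_vecMulVec, hij]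
  have hσ : σ.PosSemidef := (posSemidef_vecMulVec_self_star _).smul (by positivity)
  have hρσ : ρ + σ = single i i 1 + single j j 1 := by
    rw [← smul_add, vecMulVec_add_add_vecMulVec_sub, smul_smul, inv_mul_cancel₀ two_ne_zero,
      one_smul, single_eq_single_vecMulVec_single, single_eq_single_vecMulVec_single]
    simp [x, y]
  have hclone (k : H) {p : H × H} (hp : p ≠ (k, k)) : Λ (single k k 1) p p = 0 :=
    (hCP.posSemidef_apply (isDensity_single k).1).apply_self_eq_zero_of_ptrace_eq_single
      (hΛ _ (isDensity_single k)).1 (hΛ _ (isDensity_single k)).2 hp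
  have hΛρ {p : H × H} (hi : p ≠ (i, i)) (hj : p ≠ (j, j)) : Λ ρ p p = 0 := by
    refine (hCP.posSemidef_apply hρ.1).apply_self_eq_zero_of_add (hCP.posSemidef_apply hσ) ?_
    rw [← map_add, hρσ, map_add, Matrix.add_apply, hclone i hi, hclone j hj, add_zero]
  have hρij : ptraceRight (Λ ρ) i j = 0 := by
    refine (hCP.posSemidef_apply hρ.1).ptraceRight_apply_eq_zero fun k => ?_
    by_cases hk : k = i
    · exact .inr (hΛρ (by simp [hij.symm]) (by simp [hk, hij]))
    · exact .inl (hΛρ (by simp [hk]) (by simp [hij]))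
  rw [(hΛ ρ hρ).1] at hρij
  simp [ρ, x, y, vecMulVec_apply, hij] at hρij

/-- No-cloning: for `dim H ≥ 2` there is no channel
`Λ : L(H) → L(H ⊗ H)` with `Tr₂[Λ(ρ)] = ρ` and `Tr₁[Λ(ρ)] = ρ` for all density matrices. -/
theorem stmt_10 {H : Type*} [Fintype H] [DecidableEq H] (hdim : 2 ≤ Fintype.card H) :
    ¬ ∃ Λ : Matrix H H ℂ →ₗ[ℂ] Matrix (H × H) (H × H) ℂ, IsChannel Λ ∧
        ∀ ρ, IsDensity ρ → ptraceRight (Λ ρ) = ρ ∧ ptraceLeft (Λ ρ) = ρ :=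
  stmt_10_general hdim

end
end

section
/- Two observables A and B on H are compatible if and only if there exist an A-compatible instrument I_A and a B-compatible instrument I_B (with the same output space) that are traditionally compatible. -/
open Matrix BigOperators ComplexOrder

noncomputable section

/-! A joint observable `G` of `A` and `B` gives the joint instrument `ρ ↦ tr (ρ G(x, y))` with
one-dimensional output, whose marginals measure `A` and `B`. Conversely, every linear map `Φ` has
an effect `E` with `tr Φ(ρ) = tr (ρ E)`. The effects of a joint instrument form a POVM (positive
by complete positivity, summing to `1` by trace preservation), and its marginals are the effects
of the two instruments, which are `A` and `B` because the functionals `ρ ↦ tr (ρ M)` are already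
determined by their values on density matrices. -/

section Density
variable {H : Type*} [Fintype H]

lemma isDensity_smul_vecMulVec {v : H → ℂ} (hv : v ≠ 0) :
    IsDensity ((v ⬝ᵥ star v)⁻¹ • vecMulVec v (star v)) := by
  have hpos : 0 < v ⬝ᵥ star v := by
    rw [dotProduct_comm]; exact dotProduct_star_self_pos_iff.mpr hv
  refine ⟨(posSemidef_vecMulVec_self_star v).smul (inv_nonneg.mpr hpos.le), ?_⟩
  rw [trace_smul, trace_vecMulVec, smul_eq_mul, inv_mul_cancel₀ hpos.ne']

lemma trace_vecMulVec_star_mul (v : H → ℂ) (M : Matrix H H ℂ) :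
    (vecMulVec v (star v) * M).trace = star v ⬝ᵥ M *ᵥ v := by
  rw [vecMulVec_mul, trace_vecMulVec, dotProduct_comm, dotProduct_mulVec]

variable [DecidableEq H]

lemma eq_zero_of_forall_star_dotProduct_mulVec {D : Matrix H H ℂ}
    (h : ∀ v, star v ⬝ᵥ D *ᵥ v = 0) : D = 0 := by
  refine (toEuclideanLin (𝕜 := ℂ) (m := H) (n := H)).map_eq_zero_iff.mp <|
    (inner_map_self_eq_zero _).mp fun x => ?_
  rw [EuclideanSpace.inner_eq_star_dotProduct, ofLp_toLpLin, toLin'_apply, dotProduct_star,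
    dotProduct_comm, h, star_zero]

lemma eq_of_forall_isDensity_trace_mul_eq {M N : Matrix H H ℂ}
    (h : ∀ ρ, IsDensity ρ → (ρ * M).trace = (ρ * N).trace) : M = N := by
  refine sub_eq_zero.mp <| eq_zero_of_forall_star_dotProduct_mulVec fun v => ?_
  obtain rfl | hv := eq_or_ne v 0
  · simp
  have hne : (v ⬝ᵥ star v)⁻¹ ≠ 0 := by
    rw [dotProduct_comm]; exact inv_ne_zero (dotProduct_star_self_pos_iff.mpr hv).ne'
  have hρ := h _ (isDensity_smul_vecMulVec hv)
  rw [smul_mul_assoc, smul_mul_assoc, trace_smul, trace_smul, smul_right_inj hne] at hρ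
  rw [sub_mulVec, dotProduct_sub, ← trace_vecMulVec_star_mul, ← trace_vecMulVec_star_mul, hρ,
    sub_self]

end Density

section Effect
variable {H K : Type*} [Fintype H] [DecidableEq H] [Fintype K]

/-- The Heisenberg dual of `Φ` evaluated at `1`. -/
def effect : (Matrix H H ℂ →ₗ[ℂ] Matrix K K ℂ) →ₗ[ℂ] Matrix H H ℂ where
  toFun Φ := Matrix.of fun k j => (Φ (single j k 1)).trace
  map_add' Φ Ψ := by ext; simp [trace_add]
  map_smul' c Φ := by ext; simp [trace_smul]

lemma trace_apply_eq_trace_mul_effect (Φ : Matrix H H ℂ →ₗ[ℂ] Matrix K K ℂ)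
    (ρ : Matrix H H ℂ) : (Φ ρ).trace = (ρ * effect Φ).trace := by
  induction ρ using Matrix.induction_on' with
  | h_zero => simp
  | h_add p q hp hq => rw [map_add, trace_add, hp, hq, Matrix.add_mul, trace_add]
  | h_std_basis i j x =>
    rw [trace_single_mul, show single i j x = x • single i j 1 by simp, map_smul, trace_smul]
    rfl

lemma effect_eq_of_forall_isDensity {Φ : Matrix H H ℂ →ₗ[ℂ] Matrix K K ℂ} {E : Matrix H H ℂ}
    (h : ∀ ρ, IsDensity ρ → (Φ ρ).trace = (ρ * E).trace) : effect Φ = E :=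
  eq_of_forall_isDensity_trace_mul_eq fun ρ hρ =>
    (trace_apply_eq_trace_mul_effect Φ ρ).symm.trans (h ρ hρ)

lemma IsCP.posSemidef_effect {Φ : Matrix H H ℂ →ₗ[ℂ] Matrix K K ℂ} (hΦ : IsCP Φ) :
    (effect Φ).PosSemidef := by
  obtain ⟨m, Ks, hKs⟩ := hΦ
  have : effect Φ = ∑ i, (Ks i)ᴴ * Ks i := effect_eq_of_forall_isDensity fun ρ _ => by
    simp only [hKs, trace_sum, Matrix.mul_sum]
    exact Finset.sum_congr rfl fun i _ => by rw [trace_mul_cycle, trace_mul_comm]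
  rw [this]
  exact posSemidef_sum _ fun i _ => posSemidef_conjTranspose_mul_self _

lemma IsInstrument.isPOVM_effect {ι : Type*} [Fintype ι]
    {Φ : ι → (Matrix H H ℂ →ₗ[ℂ] Matrix K K ℂ)} (hΦ : IsInstrument Φ) :
    IsPOVM fun x => effect (Φ x) := by
  refine ⟨fun x => (hΦ.1 x).posSemidef_effect, ?_⟩
  rw [← map_sum]
  exact effect_eq_of_forall_isDensity fun ρ _ => by rw [hΦ.2, Matrix.mul_one]

lemma ACompatible.effect_eq {ι : Type*} [Fintype ι] {A : ι → Matrix H H ℂ}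
    {I : ι → (Matrix H H ℂ →ₗ[ℂ] Matrix K K ℂ)} (h : ACompatible A I) (x : ι) :
    effect (I x) = A x :=
  effect_eq_of_forall_isDensity fun ρ hρ => h ρ hρ x

lemma TraditionallyCompatible.obsCompatible {ιx ιy : Type*} [Fintype ιx] [Fintype ιy]
    {A : ιx → Matrix H H ℂ} {B : ιy → Matrix H H ℂ}
    {IA : ιx → (Matrix H H ℂ →ₗ[ℂ] Matrix K K ℂ)} {IB : ιy → (Matrix H H ℂ →ₗ[ℂ] Matrix K K ℂ)}
    (h : TraditionallyCompatible IA IB) (hA : ACompatible A IA) (hB : ACompatible B IB) :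
    ObsCompatible A B := by
  obtain ⟨Φ, hΦ, hΦA, hΦB⟩ := h
  refine ⟨fun p => effect (Φ p), hΦ.isPOVM_effect, fun x => ?_, fun y => ?_⟩
  · rw [← map_sum, hΦA, hA.effect_eq]
  · rw [← map_sum, hΦB, hB.effect_eq]

end Effect

lemma IsCP.of_kraus {H K ι : Type*} [Fintype H] [Fintype K] [Fintype ι]
    {Φ : Matrix H H ℂ →ₗ[ℂ] Matrix K K ℂ} (Ks : ι → Matrix K H ℂ)
    (h : ∀ ρ, Φ ρ = ∑ i, Ks i * ρ * (Ks i)ᴴ) : IsCP Φ :=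
  ⟨Fintype.card ι, Ks ∘ (Fintype.equivFin ι).symm, fun ρ => by
    rw [h, ← Equiv.sum_comp (Fintype.equivFin ι).symm]; rfl⟩

section MeasureMap
variable {H : Type*} [Fintype H]

def measureMap (P : Matrix H H ℂ) : Matrix H H ℂ →ₗ[ℂ] Matrix (Fin 1) (Fin 1) ℂ :=
  (traceLinearMap H ℂ ℂ ∘ₗ LinearMap.mulRight ℂ P).smulRight 1

lemma measureMap_apply (P ρ : Matrix H H ℂ) : measureMap P ρ = (ρ * P).trace • 1 := rfl

lemma trace_measureMap (P ρ : Matrix H H ℂ) : (measureMap P ρ).trace = (ρ * P).trace := by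
  simp [measureMap_apply]

lemma sum_measureMap {ι : Type*} (s : Finset ι) (P : ι → Matrix H H ℂ) :
    ∑ i ∈ s, measureMap (P i) = measureMap (∑ i ∈ s, P i) := by
  ext ρ : 1
  simp [measureMap_apply, Matrix.mul_sum, trace_sum, Finset.sum_smul]

lemma aCompatible_measureMap {ι : Type*} [Fintype ι] (P : ι → Matrix H H ℂ) :
    ACompatible P fun x => measureMap (P x) :=
  fun ρ _ x => trace_measureMap (P x) ρ

variable [DecidableEq H]

open scoped MatrixOrder in
lemma isCP_measureMap {P : Matrix H H ℂ} (hP : P.PosSemidef) : IsCP (measureMap P) := by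
  obtain ⟨B, rfl⟩ := CStarAlgebra.nonneg_iff_eq_star_mul_self.mp hP.nonneg
  refine IsCP.of_kraus (fun h => replicateRow (Fin 1) (B h)) fun ρ => ?_
  have hrow : ∀ (h : H) (a b : Fin 1),
      (replicateRow (Fin 1) (B h) * ρ * (replicateRow (Fin 1) (B h))ᴴ) a b = (B * ρ * Bᴴ) h h :=
    fun h a b => by simp [mul_apply]
  ext a b
  rw [Subsingleton.elim a b, measureMap_apply, star_eq_conjTranspose, ← Matrix.mul_assoc,
    trace_mul_cycle, Matrix.sum_apply]
  simp only [hrow, Matrix.smul_apply, one_apply_eq, smul_eq_mul, mul_one, trace, diag_apply]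

lemma isInstrument_measureMap {ι : Type*} [Fintype ι] {P : ι → Matrix H H ℂ} (hP : IsPOVM P) :
    IsInstrument fun x => measureMap (P x) :=
  ⟨fun x => isCP_measureMap (hP.1 x), fun ρ => by
    rw [sum_measureMap, hP.2, trace_measureMap, Matrix.mul_one]⟩

lemma ObsCompatible.traditionallyCompatible_measureMap {ιx ιy : Type*} [Fintype ιx] [Fintype ιy]
    {A : ιx → Matrix H H ℂ} {B : ιy → Matrix H H ℂ} (h : ObsCompatible A B) :
    TraditionallyCompatible (fun x => measureMap (A x)) (fun y => measureMap (B y)) := by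
  obtain ⟨G, hG, hGA, hGB⟩ := h
  refine ⟨fun p => measureMap (G p), isInstrument_measureMap hG, fun x => ?_, fun y => ?_⟩
  · rw [sum_measureMap, hGA]
  · rw [sum_measureMap, hGB]

end MeasureMap

/-- Observables `A` and `B` are compatible iff there exist an `A`-compatible
instrument and a `B`-compatible instrument (with the same output space) that are
traditionally compatible. -/
theorem stmt_12 {ιx ιy H : Type*} [Fintype ιx] [Fintype ιy] [Fintype H] [DecidableEq H]
    (A : ιx → Matrix H H ℂ) (hA : IsPOVM A)
    (B : ιy → Matrix H H ℂ) (hB : IsPOVM B) :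
    ObsCompatible A B ↔
      ∃ (m : ℕ) (IA : ιx → (Matrix H H ℂ →ₗ[ℂ] Matrix (Fin m) (Fin m) ℂ))
        (IB : ιy → (Matrix H H ℂ →ₗ[ℂ] Matrix (Fin m) (Fin m) ℂ)),
        IsInstrument IA ∧ IsInstrument IB ∧
        ACompatible A IA ∧ ACompatible B IB ∧
        TraditionallyCompatible IA IB := by
  constructor
  · intro h
    exact ⟨1, fun x => measureMap (A x), fun y => measureMap (B y),
      isInstrument_measureMap hA, isInstrument_measureMap hB,
      aCompatible_measureMap A, aCompatible_measureMap B, h.traditionallyCompatible_measureMap⟩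
  · rintro ⟨m, IA, IB, -, -, hIA, hIB, hAB⟩
    exact hAB.obsCompatible hIA hIB

end
end
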